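/- Let d be an integer with d \geq 2. For a monic polynomial f of degree d over a finite field F_q, define the quadratic excess Q(f) = binomial(m_1(f), 2) - m_2(f), where m_1(f) is the number of monic linear factors of f counted with multiplicity and m_2(f) is the number of monic irreducible quadratic factors of f counted with multiplicity. Then there exists a polynomial p in Z[X] with nonnegative integer coefficients, with p(0) = 0 and degree at most d, such that for every finite field F_q, \sum_{f} Q(f) = p(q) where the sum runs over all monic polynomials of degree d in F_q[x], and moreover p(1) = binomial(d, 2). -/

import Mathlib

open Polynomial

/-- `m_j(f)`: the number of irreducible factors of `f` of degree `j`, counted with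
multiplicity. -/
noncomputable def factorCount {F : Type*} [Field F] (j : ℕ) (f : F[X]) : ℕ :=
  Multiset.count j ((UniqueFactorizationMonoid.factors f).map natDegree)

/-- The quadratic excess `Q(f) = binomial(m₁(f), 2) - m₂(f)`. -/
noncomputable def quadExcess {F : Type*} [Field F] (f : F[X]) : ℤ :=
  ((factorCount 1 f).choose 2 : ℤ) - (factorCount 2 f : ℤ)

/-!
Write `c_g(f)` for the multiplicity of a monic irreducible `g` in `f`. For `f` monic of degree
`d ≤ N` one has `c_g(f) = #{i ∈ [1, N] | g ^ i ∣ f}`, and exactly `q ^ (d - deg h)` monic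
polynomials of degree `d` are divisible by a monic `h` of degree at most `d`. Expanding
`2Q = m₁² - m₁ - 2m₂` over pairs of linear factors and over irreducible quadratics, and
counting the latter through `m₁ + 2m₂ = 2` on quadratics, turns `2 ∑ Q` into a combination of
sums `S(d) = ∑_{wt x ≤ d} q ^ (d - wt x)`. Each of them obeys
`S(d + 1) = q S(d) + #{x | wt x = d + 1}`, so
`∑_{deg f = d + 1} Q = q ∑_{deg f = d} Q + ⌈d/2⌉ q + ⌊d/2⌋ q²`. The polynomial defined by this
recursion visibly has nonnegative coefficients, vanishes at `0`, and takes the value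
`binom(d, 2)` at `1`.
-/

open Finset UniqueFactorizationMonoid
open scoped Classical

noncomputable def quadExcessPoly : ℕ → ℤ[X]
  | 0 => 0
  | d + 1 =>
    X * quadExcessPoly d + C (((d + 1) / 2 : ℕ) : ℤ) * X + C ((d / 2 : ℕ) : ℤ) * X ^ 2

namespace quadExcessPoly

lemma coeff_nonneg (d i : ℕ) : 0 ≤ (quadExcessPoly d).coeff i := by
  induction d generalizing i with
  | zero => simp [quadExcessPoly]
  | succ d ih =>
    rcases i with _ | i
    · simp [quadExcessPoly]
    · simp only [quadExcessPoly, coeff_add, coeff_X_mul, coeff_C_mul_X, coeff_C_mul_X_pow]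
      have := ih i
      split_ifs <;> positivity

lemma eval_zero (d : ℕ) : (quadExcessPoly d).eval 0 = 0 := by
  cases d <;> simp [quadExcessPoly]

lemma natDegree_le (d : ℕ) : (quadExcessPoly d).natDegree ≤ d := by
  induction d with
  | zero => simp [quadExcessPoly]
  | succ d ih =>
    rcases d with _ | d
    · simp [quadExcessPoly]
    · unfold quadExcessPoly
      compute_degree
      all_goals omega

lemma eval_one (d : ℕ) : (quadExcessPoly d).eval 1 = d.choose 2 := by
  induction d with
  | zero => simp [quadExcessPoly]
  | succ d ih =>
    rw [quadExcessPoly, Nat.choose_succ_succ', Nat.choose_one_right]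
    simp only [eval_add, eval_mul, eval_X, eval_C, eval_pow, ih]
    push_cast
    omega

end quadExcessPoly

section TruncatedPowSum

variable {R ι : Type*} [CommSemiring R]

def truncatedPowSum (q : R) (S : Finset ι) (wt : ι → ℕ) (d : ℕ) : R :=
  ∑ x ∈ S, if wt x ≤ d then q ^ (d - wt x) else 0

lemma truncatedPowSum_zero (q : R) {S : Finset ι} {wt : ι → ℕ} (h : ∀ x ∈ S, wt x ≠ 0) :
    truncatedPowSum q S wt 0 = 0 :=
  sum_eq_zero fun x hx => if_neg (by simpa using h x hx)

lemma truncatedPowSum_succ (q : R) (S : Finset ι) (wt : ι → ℕ) (d : ℕ) :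
    truncatedPowSum q S wt (d + 1) =
      q * truncatedPowSum q S wt d + #{x ∈ S | wt x = d + 1} := by
  simp only [truncatedPowSum, mul_sum, card_filter, Nat.cast_sum, ← sum_add_distrib]
  refine sum_congr rfl fun x _ => ?_
  rcases lt_trichotomy (wt x) (d + 1) with h | h | h
  · rw [if_pos h.le, if_pos (by omega), if_neg h.ne, Nat.cast_zero, add_zero,
      Nat.sub_add_comm (by omega), pow_succ, mul_comm]
  · rw [if_pos h.le, if_neg (by omega), if_pos h, h, Nat.sub_self, pow_zero, mul_zero,
      Nat.cast_one, zero_add]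
  · rw [if_neg (by omega), if_neg (by omega), if_neg (by omega), mul_zero, Nat.cast_zero,
      add_zero]

lemma Nat.cast_truncatedPowSum (q : ℕ) (S : Finset ι) (wt : ι → ℕ) (d : ℕ) :
    ((truncatedPowSum q S wt d : ℕ) : R) = truncatedPowSum (q : R) S wt d := by
  simp [truncatedPowSum]

end TruncatedPowSum

lemma card_Icc_filter_eq_succ {N s : ℕ} (hs : s < N) : #{i ∈ Icc 1 N | i = s + 1} = 1 := by
  rw [filter_eq', if_pos (mem_Icc.2 ⟨by omega, hs⟩), card_singleton]

lemma card_Icc_filter_mul_two_eq_succ {N s : ℕ} (hs : s < 2 * N) :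
    #{i ∈ Icc 1 N | i * 2 = s + 1} = if Even (s + 1) then 1 else 0 := by
  split_ifs with h
  · obtain ⟨k, hk⟩ := h
    rw [card_eq_one]
    exact ⟨k, by ext i; simp only [mem_filter, mem_Icc, mem_singleton]; omega⟩
  · rw [card_eq_zero, filter_eq_empty_iff]
    rintro i - hi
    exact h ⟨i, by omega⟩

lemma card_Icc_prod_filter_add_eq_succ {N s : ℕ} (hs : s ≤ N) :
    #{x ∈ Icc 1 N ×ˢ Icc 1 N | x.1 + x.2 = s + 1} = s := by
  have : {x ∈ Icc 1 N ×ˢ Icc 1 N | x.1 + x.2 = s + 1} =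
      (Icc 1 s).image (fun i => (i, s + 1 - i)) := by
    ext ⟨i, j⟩
    simp only [mem_filter, mem_product, mem_Icc, mem_image, Prod.mk.injEq]
    constructor
    · rintro ⟨hmem, hij⟩
      exact ⟨i, by omega⟩
    · rintro ⟨a, ha, rfl, rfl⟩
      omega
  rw [this, card_image_of_injective _ fun i j h => (Prod.ext_iff.1 h).1, Nat.card_Icc,
    Nat.add_sub_cancel]

lemma card_Icc_prod_filter_max_eq_succ {N s : ℕ} (hs : s < N) :
    #{x ∈ Icc 1 N ×ˢ Icc 1 N | max x.1 x.2 = s + 1} = 2 * s + 1 := by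
  have : {x ∈ Icc 1 N ×ˢ Icc 1 N | max x.1 x.2 = s + 1} =
      Icc 1 (s + 1) ×ˢ {s + 1} ∪ {s + 1} ×ˢ Icc 1 s := by
    ext ⟨i, j⟩
    simp only [mem_filter, mem_union, mem_product, mem_Icc, mem_singleton]
    omega
  rw [this, card_union_of_disjoint, card_product, card_product, Nat.card_Icc, Nat.card_Icc,
    card_singleton]
  · omega
  · rw [disjoint_left]
    rintro ⟨i, j⟩
    simp only [mem_product, mem_Icc, mem_singleton]
    omega

-- The four sums come from `c_g²` and `c_g` for linear `g`, from `c_g c_h` for distinct linear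
-- `g, h`, and from `c_g` for irreducible quadratic `g`.
def twiceQuadExcessSum (q : ℤ) (N d : ℕ) : ℤ :=
  q * truncatedPowSum q (Icc 1 N ×ˢ Icc 1 N) (fun x => max x.1 x.2) d
    - q * truncatedPowSum q (Icc 1 N) (· * 1) d
    + (q ^ 2 - q) * (truncatedPowSum q (Icc 1 N ×ˢ Icc 1 N) (fun x => x.1 + x.2) d
      - truncatedPowSum q (Icc 1 N) (· * 2) d)

lemma two_mul_eval_quadExcessPoly (q : ℤ) {N d : ℕ} (hd : d ≤ N) :
    2 * (quadExcessPoly d).eval q = twiceQuadExcessSum q N d := by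
  induction d with
  | zero =>
    simp only [twiceQuadExcessSum, quadExcessPoly, eval_zero, mul_zero]
    rw [truncatedPowSum_zero, truncatedPowSum_zero, truncatedPowSum_zero, truncatedPowSum_zero]
    · ring
    all_goals
      intro x hx
      simp only [mem_product, mem_Icc] at hx
      omega
  | succ d ih =>
    have ih := ih (by omega)
    simp only [twiceQuadExcessSum, mul_one] at ih ⊢
    rw [truncatedPowSum_succ, truncatedPowSum_succ, truncatedPowSum_succ, truncatedPowSum_succ,
      card_Icc_prod_filter_max_eq_succ hd, card_Icc_filter_eq_succ hd,
      card_Icc_prod_filter_add_eq_succ (by omega), card_Icc_filter_mul_two_eq_succ (by omega)]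
    simp only [quadExcessPoly, eval_add, eval_mul, eval_X, eval_C, eval_pow]
    rcases Nat.even_or_odd d with ⟨k, rfl⟩ | ⟨k, rfl⟩
    · rw [if_neg (by rintro ⟨m, hm⟩; omega), show (k + k + 1) / 2 = k by omega,
        show (k + k) / 2 = k by omega]
      push_cast
      linear_combination q * ih
    · rw [if_pos ⟨k + 1, by ring⟩, show (2 * k + 1 + 1) / 2 = k + 1 by omega,
        show (2 * k + 1) / 2 = k by omega]
      push_cast
      linear_combination q * ih

lemma sq_sum_eq_sum_sq_add_sum_offDiag {ι R : Type*} [CommSemiring R] [DecidableEq ι]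
    (s : Finset ι) (c : ι → R) :
    (∑ i ∈ s, c i) ^ 2 = ∑ i ∈ s, c i ^ 2 + ∑ x ∈ s.offDiag, c x.1 * c x.2 := by
  rw [sq, sum_mul_sum, ← sum_product', ← diag_union_offDiag,
    sum_union (disjoint_diag_offDiag _), sum_diag]
  simp only [sq]

lemma two_mul_choose_two (m : ℕ) : 2 * (m.choose 2 : ℤ) = (m : ℤ) ^ 2 - m := by
  have h : ((2 * (m.choose 2 : ℤ) : ℤ) : ℚ) = (((m : ℤ) ^ 2 - m : ℤ) : ℚ) := by
    push_cast
    rw [Nat.cast_choose_two]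
    ring
  exact_mod_cast h

lemma Multiset.sum_eq_count_one_add_two_mul_count_two {s : Multiset ℕ} (hs : ∀ m ∈ s, m ≤ 2) :
    s.sum = s.count 1 + 2 * s.count 2 := by
  induction s using Multiset.induction_on with
  | empty => simp
  | cons a s ih =>
    rw [Multiset.sum_cons, ih fun m hm => hs m (Multiset.mem_cons_of_mem hm),
      Multiset.count_cons, Multiset.count_cons]
    have := hs a (Multiset.mem_cons_self a s)
    split_ifs <;> omega

lemma pow_dvd_iff_le_count_normalizedFactors {R : Type*} [CommMonoidWithZero R]
    [UniqueFactorizationMonoid R] [NormalizationMonoid R] [DecidableEq R] {p x : R}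
    (hp : Irreducible p) (hnorm : normalize p = p) (hx : x ≠ 0) {n : ℕ} :
    p ^ n ∣ x ↔ n ≤ (normalizedFactors x).count p := by
  rw [pow_dvd_iff_le_emultiplicity, emultiplicity_eq_count_normalizedFactors hp hx, hnorm,
    Nat.cast_le]

section Monics

variable {F : Type*} [Field F] [Fintype F]

lemma finite_setOf_monic_natDegree_eq (d : ℕ) :
    {f : F[X] | f.Monic ∧ f.natDegree = d}.Finite :=
  Set.finite_coe_iff.1 <|
    Finite.of_equiv _ ((monicEquivDegreeLT d).trans (degreeLTEquiv F d).toEquiv).symm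

variable (F) in
noncomputable def monics (d : ℕ) : Finset F[X] := (finite_setOf_monic_natDegree_eq d).toFinset

lemma mem_monics {d : ℕ} {f : F[X]} : f ∈ monics F d ↔ f.Monic ∧ f.natDegree = d :=
  Set.Finite.mem_toFinset _

lemma card_monics (d : ℕ) : #(monics F d) = Fintype.card F ^ d := by
  rw [monics, ← Set.ncard_eq_toFinset_card _ (finite_setOf_monic_natDegree_eq d),
    ← Nat.card_coe_set_eq]
  exact (Nat.card_congr ((monicEquivDegreeLT d).trans (degreeLTEquiv F d).toEquiv)).trans
    (by simp)

lemma card_monics_filter_dvd (d : ℕ) {h : F[X]} (hh : h.Monic) :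
    #{f ∈ monics F d | h ∣ f} =
      if h.natDegree ≤ d then Fintype.card F ^ (d - h.natDegree) else 0 := by
  split_ifs with hd
  · have : {f ∈ monics F d | h ∣ f} = (monics F (d - h.natDegree)).image (· * h) := by
      ext f
      simp only [mem_filter, mem_image, mem_monics]
      constructor
      · rintro ⟨⟨hf, rfl⟩, g, rfl⟩
        have hg := hh.of_mul_monic_left hf
        exact ⟨g, ⟨hg, by rw [hh.natDegree_mul hg]; omega⟩, mul_comm g h⟩
      · rintro ⟨g, ⟨hg, hgd⟩, rfl⟩
        exact ⟨⟨hg.mul hh, by rw [hg.natDegree_mul hh]; omega⟩, dvd_mul_left h g⟩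
    rw [this, card_image_of_injective _ (mul_left_injective₀ hh.ne_zero), card_monics]
  · rw [card_eq_zero, filter_eq_empty_iff]
    intro f hf hdvd
    obtain ⟨hfm, rfl⟩ := mem_monics.1 hf
    exact hd (natDegree_le_of_dvd hdvd hfm.ne_zero)

lemma sum_card_filter_dvd_eq_truncatedPowSum {ι : Type*} (S : Finset ι) (h : ι → F[X])
    (hh : ∀ x ∈ S, (h x).Monic) (d : ℕ) :
    ∑ f ∈ monics F d, #{x ∈ S | h x ∣ f} =
      truncatedPowSum (Fintype.card F) S (fun x => (h x).natDegree) d :=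
  (sum_card_bipartiteAbove_eq_sum_card_bipartiteBelow (fun f x => h x ∣ f)).trans
    (sum_congr rfl fun x hx => card_monics_filter_dvd d (hh x hx))

end Monics

section FactorCounts

variable {F : Type*} [Field F]

lemma map_natDegree_factors (f : F[X]) :
    (factors f).map natDegree = (normalizedFactors f).map natDegree := by
  rw [normalizedFactors, Multiset.map_map]
  exact Multiset.map_congr rfl fun g _ => (natDegree_eq_of_degree_eq degree_normalize).symm

lemma sum_map_natDegree_normalizedFactors {f : F[X]} (hf : f.Monic) :
    ((normalizedFactors f).map natDegree).sum = f.natDegree := by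
  rw [← natDegree_multiset_prod_of_monic _ fun g hg =>
      ((Polynomial.mem_normalizedFactors_iff hf.ne_zero).1 hg).2.1,
    prod_normalizedFactors_eq hf.ne_zero, hf.normalize_eq_self]

lemma factorCount_one_add_two_mul_factorCount_two {f : F[X]} (hf : f.Monic)
    (h2 : f.natDegree = 2) : factorCount 1 f + 2 * factorCount 2 f = 2 := by
  have hsum := sum_map_natDegree_normalizedFactors hf
  rw [h2, ← map_natDegree_factors] at hsum
  rw [factorCount, factorCount, ← Multiset.sum_eq_count_one_add_two_mul_count_two
    fun m hm => hsum ▸ Multiset.le_sum_of_mem hm, hsum]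

lemma two_mul_quadExcess (f : F[X]) :
    2 * quadExcess f = (factorCount 1 f : ℤ) ^ 2 - factorCount 1 f - 2 * factorCount 2 f := by
  rw [quadExcess, mul_sub, two_mul_choose_two]

lemma count_normalizedFactors_eq_card_filter_pow_dvd {g f : F[X]} (hg : Irreducible g)
    (hgm : g.Monic) (hf : f ≠ 0) {N : ℕ} (hN : f.natDegree ≤ N) :
    (normalizedFactors f).count g = #{i ∈ Icc 1 N | g ^ i ∣ f} := by
  have hdvd {i : ℕ} : g ^ i ∣ f ↔ i ≤ (normalizedFactors f).count g :=
    pow_dvd_iff_le_count_normalizedFactors hg hgm.normalize_eq_self hf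
  have hle : (normalizedFactors f).count g ≤ N := by
    have := natDegree_le_of_dvd (hdvd.2 le_rfl) hf
    rw [natDegree_pow] at this
    nlinarith [hg.natDegree_pos]
  have : {i ∈ Icc 1 N | g ^ i ∣ f} = Icc 1 ((normalizedFactors f).count g) := by
    ext i
    simp only [mem_filter, mem_Icc, hdvd]
    omega
  rw [this, Nat.card_Icc, Nat.add_sub_cancel]

lemma count_mul_count_normalizedFactors_eq_card_filter {g h f : F[X]} (hg : Irreducible g)
    (hgm : g.Monic) (hh : Irreducible h) (hhm : h.Monic) (hf : f ≠ 0) {N : ℕ}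
    (hN : f.natDegree ≤ N) :
    (normalizedFactors f).count g * (normalizedFactors f).count h =
      #{x ∈ Icc 1 N ×ˢ Icc 1 N | g ^ x.1 ∣ f ∧ h ^ x.2 ∣ f} := by
  rw [count_normalizedFactors_eq_card_filter_pow_dvd hg hgm hf hN,
    count_normalizedFactors_eq_card_filter_pow_dvd hh hhm hf hN, ← card_product,
    ← filter_product]

variable [Fintype F]

variable (F) in
noncomputable def monicIrreducibles (j : ℕ) : Finset F[X] := {g ∈ monics F j | Irreducible g}

lemma factorCount_eq_sum_count {f : F[X]} (hf : f ≠ 0) (j : ℕ) :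
    factorCount j f = ∑ g ∈ monicIrreducibles F j, (normalizedFactors f).count g := by
  rw [factorCount, map_natDegree_factors, Multiset.count_map,
    ← Multiset.sum_count_eq_card (s := monicIrreducibles F j)]
  · refine sum_congr rfl fun g hg => Multiset.count_filter_of_pos ?_
    exact ((mem_monics.1 (mem_filter.1 hg).1).2).symm
  · intro g hg
    obtain ⟨hmem, rfl⟩ := Multiset.mem_filter.1 hg
    obtain ⟨hirr, hmon, -⟩ := (Polynomial.mem_normalizedFactors_iff hf).1 hmem
    exact mem_filter.2 ⟨mem_monics.2 ⟨hmon, rfl⟩, hirr⟩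

lemma card_monicIrreducibles_one : #(monicIrreducibles F 1) = Fintype.card F := by
  rw [monicIrreducibles, filter_true_of_mem, card_monics, pow_one]
  intro g hg
  obtain ⟨hgm, hg1⟩ := mem_monics.1 hg
  exact irreducible_of_degree_eq_one (by rw [degree_eq_natDegree hgm.ne_zero, hg1]; rfl)

lemma sum_count_normalizedFactors {g : F[X]} (hg : Irreducible g) (hgm : g.Monic) {N d : ℕ}
    (hd : d ≤ N) :
    ∑ f ∈ monics F d, (normalizedFactors f).count g =
      truncatedPowSum (Fintype.card F) (Icc 1 N) (· * g.natDegree) d := by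
  rw [sum_congr rfl fun f hf => count_normalizedFactors_eq_card_filter_pow_dvd hg hgm
      (mem_monics.1 hf).1.ne_zero ((mem_monics.1 hf).2.trans_le hd),
    sum_card_filter_dvd_eq_truncatedPowSum _ _ fun i _ => hgm.pow i]
  simp only [natDegree_pow]

lemma sum_count_normalizedFactors_sq {g : F[X]} (hg : Irreducible g) (hgm : g.Monic) {N d : ℕ}
    (hd : d ≤ N) :
    ∑ f ∈ monics F d, (normalizedFactors f).count g ^ 2 =
      truncatedPowSum (Fintype.card F) (Icc 1 N ×ˢ Icc 1 N)
        (fun x => max x.1 x.2 * g.natDegree) d := by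
  have hmax {f : F[X]} (hf : f ∈ monics F d) (x : ℕ × ℕ) :
      g ^ x.1 ∣ f ∧ g ^ x.2 ∣ f ↔ g ^ max x.1 x.2 ∣ f := by
    simp only [pow_dvd_iff_le_count_normalizedFactors hg hgm.normalize_eq_self
      (mem_monics.1 hf).1.ne_zero, max_le_iff]
  rw [sum_congr rfl fun f hf => by
      rw [sq, count_mul_count_normalizedFactors_eq_card_filter hg hgm hg hgm
        (mem_monics.1 hf).1.ne_zero ((mem_monics.1 hf).2.trans_le hd),
        filter_congr fun x _ => hmax hf x],
    sum_card_filter_dvd_eq_truncatedPowSum _ _ fun x _ => hgm.pow _]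
  simp only [natDegree_pow]

lemma sum_count_mul_count_normalizedFactors_of_ne {g h : F[X]} (hg : Irreducible g)
    (hgm : g.Monic) (hh : Irreducible h) (hhm : h.Monic) (hne : g ≠ h) {N d : ℕ} (hd : d ≤ N) :
    ∑ f ∈ monics F d, (normalizedFactors f).count g * (normalizedFactors f).count h =
      truncatedPowSum (Fintype.card F) (Icc 1 N ×ˢ Icc 1 N)
        (fun x => x.1 * g.natDegree + x.2 * h.natDegree) d := by
  have hcop : IsCoprime g h := hg.coprime_iff_not_dvd.2 fun hdvd =>
    hne (eq_of_monic_of_associated hgm hhm (hg.associated_of_dvd hh hdvd))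
  have hmul (f : F[X]) (x : ℕ × ℕ) : g ^ x.1 ∣ f ∧ h ^ x.2 ∣ f ↔ g ^ x.1 * h ^ x.2 ∣ f :=
    ⟨fun ⟨h₁, h₂⟩ => hcop.pow.mul_dvd h₁ h₂,
      fun hdvd => ⟨(dvd_mul_right _ _).trans hdvd, (dvd_mul_left _ _).trans hdvd⟩⟩
  rw [sum_congr rfl fun f hf => by
      rw [count_mul_count_normalizedFactors_eq_card_filter hg hgm hh hhm
        (mem_monics.1 hf).1.ne_zero ((mem_monics.1 hf).2.trans_le hd),
        filter_congr fun x _ => hmul f x],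
    sum_card_filter_dvd_eq_truncatedPowSum _ _ fun x _ => (hgm.pow _).mul (hhm.pow _)]
  simp only [(hgm.pow _).natDegree_mul (hhm.pow _), natDegree_pow]

end FactorCounts

section ExcessSum

variable {F : Type*} [Field F] [Fintype F]

lemma sum_factorCount (j : ℕ) {N d : ℕ} (hd : d ≤ N) :
    ∑ f ∈ monics F d, factorCount j f =
      #(monicIrreducibles F j) * truncatedPowSum (Fintype.card F) (Icc 1 N) (· * j) d := by
  rw [sum_congr rfl fun f hf => factorCount_eq_sum_count (mem_monics.1 hf).1.ne_zero j,
    sum_comm, ← smul_eq_mul, ← sum_const]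
  refine sum_congr rfl fun g hg => ?_
  obtain ⟨hgm, hgj⟩ := mem_monics.1 (mem_filter.1 hg).1
  rw [sum_count_normalizedFactors (mem_filter.1 hg).2 hgm hd, hgj]

lemma sum_factorCount_one_sq {N d : ℕ} (hd : d ≤ N) :
    ∑ f ∈ monics F d, factorCount 1 f ^ 2 =
      Fintype.card F *
          truncatedPowSum (Fintype.card F) (Icc 1 N ×ˢ Icc 1 N) (fun x => max x.1 x.2) d +
        (Fintype.card F * Fintype.card F - Fintype.card F) *
          truncatedPowSum (Fintype.card F) (Icc 1 N ×ˢ Icc 1 N) (fun x => x.1 + x.2) d := by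
  have hlin {g : F[X]} (hg : g ∈ monicIrreducibles F 1) :
      Irreducible g ∧ g.Monic ∧ g.natDegree = 1 :=
    ⟨(mem_filter.1 hg).2, mem_monics.1 (mem_filter.1 hg).1⟩
  rw [sum_congr rfl fun f hf => by
      rw [factorCount_eq_sum_count (mem_monics.1 hf).1.ne_zero, sq_sum_eq_sum_sq_add_sum_offDiag],
    sum_add_distrib, sum_comm, sum_comm (s := monics F d)]
  congr 1
  · rw [sum_congr rfl fun g hg => ?_, sum_const, card_monicIrreducibles_one, smul_eq_mul]
    obtain ⟨hirr, hgm, hg1⟩ := hlin hg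
    rw [sum_count_normalizedFactors_sq hirr hgm hd, hg1]
    simp only [mul_one]
  · rw [sum_congr rfl fun x hx => ?_, sum_const, offDiag_card, card_monicIrreducibles_one,
      smul_eq_mul]
    obtain ⟨hx₁, hx₂, hne⟩ := mem_offDiag.1 hx
    obtain ⟨hirr₁, hm₁, hd₁⟩ := hlin hx₁
    obtain ⟨hirr₂, hm₂, hd₂⟩ := hlin hx₂
    rw [sum_count_mul_count_normalizedFactors_of_ne hirr₁ hm₁ hirr₂ hm₂ hne hd, hd₁, hd₂]
    simp only [mul_one]

lemma two_mul_card_monicIrreducibles_two_add_card :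
    2 * #(monicIrreducibles F 2) + Fintype.card F = Fintype.card F ^ 2 := by
  have hsum : ∑ f ∈ monics F 2, (factorCount 1 f + 2 * factorCount 2 f) =
      2 * Fintype.card F ^ 2 := by
    rw [sum_congr rfl fun f hf => factorCount_one_add_two_mul_factorCount_two
      (mem_monics.1 hf).1 (mem_monics.1 hf).2, sum_const, card_monics, smul_eq_mul, mul_comm]
  have hIcc : (Icc 1 2 : Finset ℕ) = {1, 2} := by decide
  have hpow₁ : truncatedPowSum (Fintype.card F) (Icc 1 2) (· * 1) 2 = Fintype.card F + 1 := by
    simp [truncatedPowSum, hIcc]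
  have hpow₂ : truncatedPowSum (Fintype.card F) (Icc 1 2) (· * 2) 2 = 1 := by
    simp [truncatedPowSum, hIcc]
  rw [sum_add_distrib, ← mul_sum, sum_factorCount 1 le_rfl, sum_factorCount 2 le_rfl,
    card_monicIrreducibles_one, hpow₁, hpow₂] at hsum
  nlinarith [hsum]

lemma two_mul_sum_quadExcess (d : ℕ) :
    2 * ∑ f ∈ monics F d, quadExcess f = twiceQuadExcessSum (Fintype.card F) d d := by
  have hI₂ := two_mul_card_monicIrreducibles_two_add_card (F := F)
  have hq : Fintype.card F ≤ Fintype.card F * Fintype.card F := Nat.le_mul_self _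
  rw [mul_sum, sum_congr rfl fun f _ => two_mul_quadExcess f, sum_sub_distrib, sum_sub_distrib,
    ← mul_sum]
  simp only [← Nat.cast_pow, ← Nat.cast_sum]
  rw [sum_factorCount_one_sq le_rfl, sum_factorCount 1 le_rfl, sum_factorCount 2 le_rfl,
    card_monicIrreducibles_one]
  zify [hq] at hI₂ ⊢
  simp only [Nat.cast_truncatedPowSum, twiceQuadExcessSum]
  linear_combination -(truncatedPowSum (Fintype.card F : ℤ) (Icc 1 d) (· * 2) d) * hI₂

end ExcessSum

theorem statement10_general (d : ℕ) :
    ∃ p : Polynomial ℤ, (∀ i, 0 ≤ p.coeff i) ∧ p.eval 0 = 0 ∧ p.natDegree ≤ d ∧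
      (∀ (F : Type) [Field F] [Fintype F],
        ∑ᶠ f ∈ {f : F[X] | f.Monic ∧ f.natDegree = d}, quadExcess f =
          p.eval (Fintype.card F : ℤ)) ∧
      p.eval 1 = (d.choose 2 : ℤ) := by
  refine ⟨quadExcessPoly d, quadExcessPoly.coeff_nonneg d, quadExcessPoly.eval_zero d,
    quadExcessPoly.natDegree_le d, fun F _ _ => ?_, quadExcessPoly.eval_one d⟩
  rw [finsum_mem_eq_finite_toFinset_sum _ (finite_setOf_monic_natDegree_eq d)]
  exact mul_left_cancel₀ two_ne_zero
    ((two_mul_sum_quadExcess d).trans (two_mul_eval_quadExcessPoly _ le_rfl).symm)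

/-- For `d ≥ 2` there is a polynomial `p ∈ ℤ[X]` with nonnegative coefficients,
`p(0) = 0` and `deg p ≤ d`, such that `∑_{f monic, deg f = d} Q(f) = p(q)` for every
finite field `F_q`, and `p(1) = binomial(d, 2)`. -/
theorem statement10 (d : ℕ) (hd : 2 ≤ d) :
    ∃ p : Polynomial ℤ, (∀ i, 0 ≤ p.coeff i) ∧ p.eval 0 = 0 ∧ p.natDegree ≤ d ∧
      (∀ (F : Type) [Field F] [Fintype F],
        ∑ᶠ f ∈ {f : F[X] | f.Monic ∧ f.natDegree = d}, quadExcess f =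
          p.eval (Fintype.card F : ℤ)) ∧
      p.eval 1 = (d.choose 2 : ℤ) :=
  statement10_general d
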